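/- arXiv:1910.13170 — 10 statements merged into one kernel-verified Lean document; each statement's English description precedes it below -/
import Mathlib

section
/- The asymptotic density of the set {n ∈ ℕ : s(n+1) ≥ s(n)} equals 3/4. -/
/-!
A carry turns the trailing block of ones of `n` into zeros and adds a single one, so
`s (n + 1) < s n` exactly when `n` ends in `11` in binary, i.e. `n ≡ 3 [MOD 4]`.
The complement of one residue class modulo 4 has density `3 / 4`.
-/

open Filter Topology

namespace Nat

theorem digits_sum_of_lt {b r : ℕ} (hr : r < b) : (digits b r).sum = r := by
  rcases eq_or_ne r 0 with rfl | h0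
  · simp
  · simp [digits_of_lt b r h0 hr]

theorem digits_sum_add_base_pow_mul {b k n : ℕ} (hb : 1 < b) (hn : n < b ^ k) (m : ℕ) :
    (digits b (n + b ^ k * m)).sum = (digits b n).sum + (digits b m).sum := by
  rcases eq_or_ne m 0 with rfl | hm
  · simp
  have hlen : (digits b n).length ≤ k := (digits_length_le_iff hb n).mpr hn
  rw [← Nat.add_sub_cancel' hlen, ← digits_append_zeroes_append_digits hb (pos_of_ne_zero hm)]
  simp

theorem digits_sum_add_base_mul {b r : ℕ} (hb : 1 < b) (hr : r < b) (q : ℕ) :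
    (digits b (r + b * q)).sum = r + (digits b q).sum := by
  have h := digits_sum_add_base_pow_mul hb (k := 1) (by rwa [pow_one]) q
  rwa [pow_one, digits_sum_of_lt hr] at h

theorem digits_sum_succ_le {b : ℕ} (hb : 1 < b) (n : ℕ) :
    (digits b (n + 1)).sum ≤ (digits b n).sum + 1 := by
  induction n using Nat.strong_induction_on with
  | _ n ih =>
    obtain ⟨r, q, hr, rfl⟩ : ∃ r q, r < b ∧ n = r + b * q :=
      ⟨n % b, n / b, mod_lt n (by omega), (mod_add_div n b).symm⟩
    rw [digits_sum_add_base_mul hb hr]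
    rcases Nat.lt_or_ge (r + 1) b with hr1 | hr1
    · rw [show r + b * q + 1 = (r + 1) + b * q by ring, digits_sum_add_base_mul hb hr1]
      omega
    · have hq : q < r + b * q := by nlinarith
      rw [show r + b * q + 1 = 0 + b * (q + 1) by rw [mul_add]; omega,
        digits_sum_add_base_mul hb (by omega)]
      have := ih q hq
      omega

theorem digits_two_sum_le_succ_iff (n : ℕ) :
    (digits 2 n).sum ≤ (digits 2 (n + 1)).sum ↔ n % 4 ≠ 3 := by
  have hsum (r q : ℕ) (hr : r < 4) :
      (digits 2 (r + 4 * q)).sum = (digits 2 r).sum + (digits 2 q).sum :=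
    digits_sum_add_base_pow_mul (k := 2) (by norm_num) hr q
  obtain ⟨r, q, hr, rfl⟩ : ∃ r q, r < 4 ∧ n = r + 4 * q :=
    ⟨n % 4, n / 4, mod_lt n (by omega), (mod_add_div n 4).symm⟩
  rw [hsum r q hr]
  rcases Nat.lt_or_ge r 3 with hr3 | hr3
  · rw [show r + 4 * q + 1 = (r + 1) + 4 * q by ring, hsum _ _ (by omega)]
    interval_cases r <;> simp
  · obtain rfl : r = 3 := by omega
    rw [show 3 + 4 * q + 1 = 0 + 4 * (q + 1) by ring, hsum _ _ (by omega)]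
    have := digits_sum_succ_le (b := 2) (by norm_num) q
    have h3 : (digits 2 3).sum = 2 := by norm_num
    simp only [h3, digits_zero, List.sum_nil]
    omega

end Nat

theorem card_filter_mod_four_ne_three (N : ℕ) :
    ((Finset.range N).filter (fun n => n % 4 ≠ 3)).card = N - N / 4 := by
  induction N with
  | zero => simp
  | succ N ih =>
    rw [Finset.range_add_one, Finset.filter_insert]
    split_ifs
    · rw [Finset.card_insert_of_notMem (by simp), ih]
      omega
    · rw [ih]
      omega

theorem tendsto_natCast_sub_div_div (k : ℕ) :
    Tendsto (fun N : ℕ => ((N - N / k : ℕ) : ℝ) / N) atTop (𝓝 (1 - 1 / k)) := by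
  have hdiv : Tendsto (fun N : ℕ => ((N / k : ℕ) : ℝ) / N) atTop (𝓝 (1 / k)) := by
    refine ((tendsto_nat_floor_mul_div_atTop (a := (1 / k : ℝ)) (by positivity)).comp
      tendsto_natCast_atTop_atTop).congr fun N => ?_
    simp [← Nat.floor_div_eq_div (K := ℝ), div_eq_inv_mul]
  refine (tendsto_const_nhds.sub hdiv).congr' ?_
  filter_upwards [eventually_ne_atTop 0] with N hN
  rw [Nat.cast_sub (Nat.div_le_self N k), sub_div, div_self (by exact_mod_cast hN)]

/-- The asymptotic density of `{n : s(n+1) ≥ s(n)}` equals `3/4`,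
where `s` is the binary sum-of-digits function. -/
theorem cusick_stmt1 :
    Tendsto
      (fun N : ℕ =>
        (((Finset.range N).filter
            (fun n => (Nat.digits 2 n).sum ≤ (Nat.digits 2 (n + 1)).sum)).card : ℝ) / N)
      atTop (nhds (3 / 4)) := by
  simp_rw [Nat.digits_two_sum_le_succ_iff, card_filter_mod_four_ne_three]
  convert tendsto_natCast_sub_div_div 4 using 2
  norm_num
end

section
/- For every integer j ≤ 1, the asymptotic density of the set {n ∈ ℕ : s(n+1) - s(n) = j} equals 2^{j-2}, and for j > 1 this density is 0. -/
/-!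
Legendre's formula `(p - 1) ν_p(n!) = n - s_p(n)`, applied to `n!` and `(n + 1)!`, gives
`s(n + 1) - s(n) = 1 - ν₂(n + 1)`. So the difference is at most `1`, and it equals `1 - v`
exactly when `n ≡ 2^v - 1 [MOD 2^(v+1)]`, a residue class of density `2^(-(v+1))`.
-/

open Filter Topology Finset Nat

theorem sub_one_mul_padicValNat_succ (p : ℕ) [hp : Fact p.Prime] (n : ℕ) :
    ((p : ℤ) - 1) * padicValNat p (n + 1) = 1 + (p.digits n).sum - (p.digits (n + 1)).sum := by
  have legendre (m : ℕ) : ((p : ℤ) - 1) * padicValNat p m ! = m - (p.digits m).sum := by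
    have := congrArg (Nat.cast : ℕ → ℤ) (sub_one_mul_padicValNat_factorial (p := p) m)
    rwa [Nat.cast_mul, Nat.cast_sub hp.out.one_le, Nat.cast_sub (digit_sum_le p m),
      Nat.cast_one] at this
  have h := legendre (n + 1)
  rw [Nat.factorial_succ, padicValNat.mul n.succ_ne_zero n.factorial_ne_zero, Nat.cast_add,
    mul_add, legendre n, Nat.cast_succ] at h
  linarith

theorem digits_two_sum_succ_sub (n : ℕ) :
    ((digits 2 (n + 1)).sum : ℤ) - (digits 2 n).sum = 1 - padicValNat 2 (n + 1) := by
  have := sub_one_mul_padicValNat_succ 2 n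
  rw [Nat.cast_ofNat, show (2 : ℤ) - 1 = 1 by norm_num, one_mul] at this
  linarith

theorem padicValNat_two_eq_iff_mod {m : ℕ} (hm : m ≠ 0) (v : ℕ) :
    padicValNat 2 m = v ↔ m % 2 ^ (v + 1) = 2 ^ v := by
  have hval : padicValNat 2 m = v ↔ 2 ^ v ∣ m ∧ ¬ 2 ^ (v + 1) ∣ m := by
    rw [padicValNat_dvd_iff_le hm, padicValNat_dvd_iff_le hm]
    omega
  rw [hval, Nat.dvd_iff_mod_eq_zero, Nat.dvd_iff_mod_eq_zero, pow_succ, Nat.mod_mul]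
  have hlt : m % 2 ^ v < 2 ^ v := Nat.mod_lt _ (by positivity)
  rcases Nat.mod_two_eq_zero_or_one (m / 2 ^ v) with h | h <;> rw [h] <;> omega

theorem padicValNat_two_succ_eq_iff_modEq (n v : ℕ) :
    padicValNat 2 (n + 1) = v ↔ n ≡ 2 ^ v - 1 [MOD 2 ^ (v + 1)] := by
  have hlt : 2 ^ v < 2 ^ (v + 1) := Nat.pow_lt_pow_right one_lt_two v.lt_succ_self
  have hshift : n ≡ 2 ^ v - 1 [MOD 2 ^ (v + 1)] ↔ n + 1 ≡ 2 ^ v [MOD 2 ^ (v + 1)] := by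
    conv_rhs => rw [← Nat.sub_add_cancel (Nat.one_le_two_pow (n := v))]
    exact ⟨(·.add_right 1), (·.add_right_cancel' 1)⟩
  rw [padicValNat_two_eq_iff_mod n.succ_ne_zero, hshift, ModEq, Nat.mod_eq_of_lt hlt]

theorem tendsto_card_filter_modEq_div {M : ℕ} (hM : 0 < M) (r : ℕ) :
    Tendsto (fun N : ℕ => (#{n ∈ range N | n ≡ r [MOD M]} : ℝ) / N) atTop (𝓝 (1 / M)) := by
  have hM' : (0 : ℝ) < M := by exact_mod_cast hM
  have hbounds (N : ℕ) : N ≤ #{n ∈ range N | n ≡ r [MOD M]} * M + M ∧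
      #{n ∈ range N | n ≡ r [MOD M]} * M ≤ N + M := by
    -- the count is `N / M` or `N / M + 1`
    rw [← count_eq_card_filter_range, count_modEq_card _ hM]
    have hlt := Nat.lt_div_mul_add (a := N) hM
    have hle := Nat.div_mul_le_self N M
    constructor <;> split_ifs <;> simp only [add_mul, one_mul, add_zero] <;> omega
  have hlow : Tendsto (fun N : ℕ => 1 / (M : ℝ) - 1 / N) atTop (𝓝 (1 / M)) := by
    simpa using (tendsto_const_nhds (x := 1 / (M : ℝ))).sub tendsto_one_div_atTop_nhds_zero_nat
  have hup : Tendsto (fun N : ℕ => 1 / (M : ℝ) + 1 / N) atTop (𝓝 (1 / M)) := by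
    simpa using (tendsto_const_nhds (x := 1 / (M : ℝ))).add tendsto_one_div_atTop_nhds_zero_nat
  refine tendsto_of_tendsto_of_tendsto_of_le_of_le' hlow hup ?_ ?_ <;>
    filter_upwards [eventually_gt_atTop 0] with N hN <;>
    have hN' : (0 : ℝ) < N := by exact_mod_cast hN
  · have : (N : ℝ) ≤ #{n ∈ range N | n ≡ r [MOD M]} * M + M := by exact_mod_cast (hbounds N).1
    rw [div_sub_div _ _ hM'.ne' hN'.ne', div_le_div_iff₀ (by positivity) hN']
    nlinarith
  · have : (#{n ∈ range N | n ≡ r [MOD M]} * M : ℝ) ≤ N + M := by exact_mod_cast (hbounds N).2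
    rw [div_add_div _ _ hM'.ne' hN'.ne', div_le_div_iff₀ hN' (by positivity)]
    nlinarith

/-- For every integer `j ≤ 1`, the asymptotic density of
`{n : s(n+1) - s(n) = j}` equals `2^(j-2)`, and for `j > 1` it is `0`. -/
theorem cusick_stmt2 (j : ℤ) :
    Tendsto
      (fun N : ℕ =>
        (((Finset.range N).filter
            (fun n => ((Nat.digits 2 (n + 1)).sum : ℤ) - ((Nat.digits 2 n).sum : ℤ) = j)).card : ℝ)
          / N)
      atTop (nhds (if j ≤ 1 then (2 : ℝ) ^ (j - 2) else 0)) := by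
  simp_rw [digits_two_sum_succ_sub]
  split_ifs with hj
  · obtain ⟨v, rfl⟩ : ∃ v : ℕ, j = 1 - v := ⟨(1 - j).toNat, by omega⟩
    have hdensity : (2 : ℝ) ^ ((1 - v : ℤ) - 2) = 1 / (2 ^ (v + 1) : ℕ) := by
      rw [show (1 - v : ℤ) - 2 = -(v + 1 : ℕ) by push_cast; ring, zpow_neg, zpow_natCast,
        one_div, Nat.cast_pow, Nat.cast_ofNat]
    rw [hdensity]
    refine (tendsto_card_filter_modEq_div (by positivity) (2 ^ v - 1)).congr fun N => ?_
    congr 3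
    refine filter_congr fun n _ => ?_
    rw [← padicValNat_two_succ_eq_iff_modEq]
    omega
  · refine tendsto_const_nhds.congr fun N => ?_
    rw [filter_false_of_mem fun n _ => by omega, card_empty, Nat.cast_zero, zero_div]
end

section
/- For all integers j and all t ≥ 0: δ(j, 2t) = δ(j, t) and δ(j, 2t+1) = (1/2)δ(j-1, t) + (1/2)δ(j+1, t+1). -/
open Filter
open scoped Classical

/-- `HasDensity' A d` : the set `A ⊆ ℕ` has asymptotic density `d`. -/
def HasDensity' (A : Set ℕ) (d : ℝ) : Prop :=
  Tendsto
    (fun N : ℕ =>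
      (((Finset.range N).filter (fun n => n ∈ A)).card : ℝ) / N)
    atTop (nhds d)

/-- `DeltaSet j t = {n : s(n+t) - s(n) = j}` with `s` the binary sum of digits. -/
def DeltaSet (j : ℤ) (t : ℕ) : Set ℕ :=
  {n : ℕ | ((Nat.digits 2 (n + t)).sum : ℤ) - ((Nat.digits 2 n).sum : ℤ) = j}

/-!
Because `s (2 * n) = s n` and `s (2 * n + 1) = s n + 1`, the even and the odd elements of
`DeltaSet j (2 * t)` are `2 * m` and `2 * m + 1` for `m ∈ DeltaSet j t`, while those of
`DeltaSet j (2 * t + 1)` come in the same way from `DeltaSet (j - 1) t` and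
`DeltaSet (j + 1) (t + 1)`. A set whose even and odd parts arise so from sets of densities `a`
and `b` has density `a / 2 + b / 2`.
-/

open Topology

namespace Nat

theorem digits_two_sum_two_mul (n : ℕ) : (digits 2 (2 * n)).sum = (digits 2 n).sum := by
  rcases eq_or_ne n 0 with rfl | hn
  · simp
  · rw [← zero_add (2 * n), digits_add 2 one_lt_two 0 n two_pos (Or.inr hn), List.sum_cons,
      zero_add]

theorem digits_two_sum_two_mul_add_one (n : ℕ) :
    (digits 2 (2 * n + 1)).sum = (digits 2 n).sum + 1 := by
  rw [add_comm, digits_add 2 one_lt_two 1 n one_lt_two (Or.inl one_ne_zero), List.sum_cons,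
    add_comm]

theorem count_eq_count_half_add_count_half {p q r : ℕ → Prop}
    [DecidablePred p] [DecidablePred q] [DecidablePred r]
    (h_even : ∀ m, r (2 * m) ↔ p m) (h_odd : ∀ m, r (2 * m + 1) ↔ q m) (N : ℕ) :
    count r N = count p ((N + 1) / 2) + count q (N / 2) := by
  induction N with
  | zero => simp
  | succ N ih =>
    rw [count_succ, ih]
    obtain ⟨m, rfl | rfl⟩ := N.even_or_odd'
    · have h₁ : (2 * m + 1) / 2 = m := by omega
      have h₂ : (2 * m + 1 + 1) / 2 = m + 1 := by omega
      rw [h₁, h₂, Nat.mul_div_cancel_left m two_pos, count_succ p]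
      simp only [h_even]
      ring
    · have h₁ : (2 * m + 1 + 1) / 2 = m + 1 := by omega
      have h₂ : (2 * m + 1 + 1 + 1) / 2 = m + 1 := by omega
      have h₃ : (2 * m + 1) / 2 = m := by omega
      rw [h₁, h₂, h₃, count_succ q]
      simp only [h_odd]
      ring

end Nat

theorem tendsto_div_of_abs_sub_mul_le {g : ℕ → ℕ} {c C : ℝ}
    (hg : ∀ N, |(g N : ℝ) - c * N| ≤ C) :
    Tendsto (fun N => (g N : ℝ) / N) atTop (𝓝 c) := by
  rw [tendsto_iff_norm_sub_tendsto_zero]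
  refine squeeze_zero' (Eventually.of_forall fun N => norm_nonneg _) ?_
    (tendsto_const_div_atTop_nhds_zero_nat C)
  filter_upwards [eventually_gt_atTop 0] with N hN
  have hN' : (0 : ℝ) < N := by exact_mod_cast hN
  rw [Real.norm_eq_abs, show (g N : ℝ) / N - c = ((g N : ℝ) - c * N) / N by field_simp, abs_div,
    Nat.abs_cast]
  exact div_le_div_of_nonneg_right (hg N) hN'.le

theorem tendsto_add_div_two_div (k : ℕ) :
    Tendsto (fun N => (((N + k) / 2 : ℕ) : ℝ) / N) atTop (𝓝 (1 / 2)) := by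
  refine tendsto_div_of_abs_sub_mul_le (C := k + 1) fun N => ?_
  have h₁ : ((N + k : ℕ) : ℝ) ≤ 2 * ((N + k) / 2 : ℕ) + 1 := by exact_mod_cast (by omega)
  have h₂ : 2 * (((N + k) / 2 : ℕ) : ℝ) ≤ (N + k : ℕ) := by exact_mod_cast (by omega)
  push_cast at h₁ h₂
  rw [abs_le]
  constructor <;> linarith

theorem hasDensity'_iff_count (A : Set ℕ) (a : ℝ) :
    HasDensity' A a ↔ Tendsto (fun N => (Nat.count (· ∈ A) N : ℝ) / N) atTop (𝓝 a) := by
  simp only [HasDensity', Nat.count_eq_card_filter_range]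

theorem HasDensity'.tendsto_count_comp_div {A : Set ℕ} {a c : ℝ} (hA : HasDensity' A a)
    {g : ℕ → ℕ} (hg_top : Tendsto g atTop atTop)
    (hg : Tendsto (fun N => (g N : ℝ) / N) atTop (𝓝 c)) :
    Tendsto (fun N => (Nat.count (· ∈ A) (g N) : ℝ) / N) atTop (𝓝 (a * c)) := by
  rw [hasDensity'_iff_count] at hA
  refine ((hA.comp hg_top).mul hg).congr fun N => ?_
  rcases eq_or_ne (g N) 0 with h | h
  · simp [h]
  · simp only [Function.comp_apply]
    field_simp

theorem HasDensity'.of_even_odd {A B C : Set ℕ} {a b : ℝ} (hA : HasDensity' A a)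
    (hB : HasDensity' B b) (h_even : ∀ m, 2 * m ∈ C ↔ m ∈ A)
    (h_odd : ∀ m, 2 * m + 1 ∈ C ↔ m ∈ B) : HasDensity' C (a / 2 + b / 2) := by
  have half_top (k : ℕ) : Tendsto (fun N => (N + k) / 2) atTop atTop :=
    (Nat.tendsto_div_const_atTop two_ne_zero).comp (tendsto_add_atTop_nat k)
  have hA' := hA.tendsto_count_comp_div (half_top 1) (tendsto_add_div_two_div 1)
  have hB' := hB.tendsto_count_comp_div (half_top 0) (tendsto_add_div_two_div 0)
  simp only [add_zero] at hB'
  rw [hasDensity'_iff_count, show a / 2 + b / 2 = a * (1 / 2) + b * (1 / 2) by ring]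
  refine (hA'.add hB').congr fun N => ?_
  rw [Nat.count_eq_count_half_add_count_half h_even h_odd]
  push_cast
  ring

section DeltaSet

variable (j : ℤ) (t m : ℕ)

theorem two_mul_mem_deltaSet_two_mul : 2 * m ∈ DeltaSet j (2 * t) ↔ m ∈ DeltaSet j t := by
  simp only [DeltaSet, Set.mem_ofPred_eq, ← mul_add, Nat.digits_two_sum_two_mul]

theorem two_mul_add_one_mem_deltaSet_two_mul :
    2 * m + 1 ∈ DeltaSet j (2 * t) ↔ m ∈ DeltaSet j t := by
  simp only [DeltaSet, Set.mem_ofPred_eq, show 2 * m + 1 + 2 * t = 2 * (m + t) + 1 by ring,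
    Nat.digits_two_sum_two_mul_add_one]
  omega

theorem two_mul_mem_deltaSet_two_mul_add_one :
    2 * m ∈ DeltaSet j (2 * t + 1) ↔ m ∈ DeltaSet (j - 1) t := by
  simp only [DeltaSet, Set.mem_ofPred_eq, ← add_assoc, ← mul_add,
    Nat.digits_two_sum_two_mul_add_one, Nat.digits_two_sum_two_mul]
  omega

theorem two_mul_add_one_mem_deltaSet_two_mul_add_one :
    2 * m + 1 ∈ DeltaSet j (2 * t + 1) ↔ m ∈ DeltaSet (j + 1) (t + 1) := by
  simp only [DeltaSet, Set.mem_ofPred_eq,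
    show 2 * m + 1 + (2 * t + 1) = 2 * (m + (t + 1)) by ring,
    Nat.digits_two_sum_two_mul_add_one, Nat.digits_two_sum_two_mul]
  omega

end DeltaSet

/-- `δ(j,2t) = δ(j,t)` and `δ(j,2t+1) = δ(j-1,t)/2 + δ(j+1,t+1)/2`. -/
theorem cusick_stmt3 (j : ℤ) (t : ℕ) :
    (∀ d : ℝ, HasDensity' (DeltaSet j t) d → HasDensity' (DeltaSet j (2 * t)) d) ∧
    (∀ d₁ d₂ : ℝ, HasDensity' (DeltaSet (j - 1) t) d₁ →
      HasDensity' (DeltaSet (j + 1) (t + 1)) d₂ →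
      HasDensity' (DeltaSet j (2 * t + 1)) (d₁ / 2 + d₂ / 2)) := by
  refine ⟨fun d hd => ?_, fun d₁ d₂ hd₁ hd₂ => ?_⟩
  · simpa only [add_halves] using hd.of_even_odd hd (two_mul_mem_deltaSet_two_mul j t)
      (two_mul_add_one_mem_deltaSet_two_mul j t)
  · exact hd₁.of_even_odd hd₂ (two_mul_mem_deltaSet_two_mul_add_one j t)
      (two_mul_add_one_mem_deltaSet_two_mul_add_one j t)
end

section
/- For every integer t ≥ 0 and every j ∈ ℤ, the set {n ∈ ℕ : s(n+t) - s(n) = j} is a finite union of arithmetic progressions (possibly empty). -/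
/-!
Choose `L` with `t < 2 ^ L` and `K` with `L + 1 - K < j`, and put `M = L + K`. If adding `t` to
`n` does not carry out of the lowest `M` bits, then `s (n + t) - s n` only depends on
`n % 2 ^ M`. If it does, then bits `L, …, M - 1` of `n` are all ones, and each of them is lost
while the higher part gains at most one, so `s (n + t) - s n ≤ L + 1 - K < j`. Hence the
solution set is a union of residue classes modulo `2 ^ M`.
-/

namespace Nat

theorem digits_sum_add_base_pow_mul_s4 {b M a : ℕ} (hb : 1 < b) (ha : a < b ^ M) (c : ℕ) :
    (b.digits (a + b ^ M * c)).sum = (b.digits a).sum + (b.digits c).sum := by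
  rcases Nat.eq_zero_or_pos c with rfl | hc
  · simp
  obtain ⟨k, hk⟩ := Nat.exists_eq_add_of_le ((digits_length_le_iff hb a).mpr ha)
  rw [hk, ← digits_append_zeroes_append_digits hb hc]
  simp

theorem digits_sum_base_pow_sub_one {b : ℕ} (hb : 1 < b) (k : ℕ) :
    (b.digits (b ^ k - 1)).sum = (b - 1) * k := by
  induction k with
  | zero => simp
  | succ k ih =>
    have hsplit : b ^ (k + 1) - 1 = (b - 1) + b ^ 1 * (b ^ k - 1) := by
      have : b ≤ b ^ (k + 1) := Nat.le_self_pow (by omega) b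
      rw [pow_succ', pow_one, Nat.mul_sub, mul_one] at *
      omega
    rw [hsplit, digits_sum_add_base_pow_mul_s4 hb (by simp; omega), ih,
      digits_of_lt b (b - 1) (by omega) (by omega)]
    simp only [List.sum_cons, List.sum_nil]
    ring

theorem digits_sum_le_of_lt_base_pow {b M n : ℕ} (hb : 1 < b) (hn : n < b ^ M) :
    (b.digits n).sum ≤ (b - 1) * M := by
  calc (b.digits n).sum ≤ (b.digits n).length • (b - 1) :=
        List.sum_le_card_nsmul _ _ fun d hd => Nat.le_sub_one_of_lt (digits_lt_base hb hd)
    _ ≤ M • (b - 1) := Nat.mul_le_mul_right _ ((digits_length_le_iff hb n).mpr hn)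
    _ = (b - 1) * M := by rw [smul_eq_mul, mul_comm]

theorem digits_sum_add_le (p : ℕ) [Fact p.Prime] (m n : ℕ) :
    (p.digits (m + n)).sum ≤ (p.digits m).sum + (p.digits n).sum := by
  -- Legendre's formula turns `m ! * n ! ∣ (m + n)!` into this inequality.
  have hv : padicValNat p (m ! * n !) ≤ padicValNat p (m + n)! :=
    (padicValNat_dvd_iff_le (factorial_ne_zero _)).mp
      (pow_padicValNat_dvd.trans (factorial_mul_factorial_dvd_factorial_add m n))
  rw [padicValNat.mul (factorial_ne_zero _) (factorial_ne_zero _)] at hv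
  have hlegendre := Nat.mul_le_mul_left (p - 1) hv
  rw [mul_add, sub_one_mul_padicValNat_factorial, sub_one_mul_padicValNat_factorial,
    sub_one_mul_padicValNat_factorial] at hlegendre
  have := digit_sum_le p m
  have := digit_sum_le p n
  have := digit_sum_le p (m + n)
  omega

theorem digits_sum_add_sub_eq_of_lt {b M r t : ℕ} (hb : 1 < b) (hrt : r + t < b ^ M) (q : ℕ) :
    ((b.digits (r + b ^ M * q + t)).sum : ℤ) - (b.digits (r + b ^ M * q)).sum =
      (b.digits (r + t)).sum - (b.digits r).sum := by
  rw [show r + b ^ M * q + t = r + t + b ^ M * q by ring, digits_sum_add_base_pow_mul_s4 hb hrt,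
    digits_sum_add_base_pow_mul_s4 hb (by omega)]
  push_cast
  ring

theorem digits_two_sum_add_sub_le_of_carry {t L K n : ℕ} (ht : t < 2 ^ L)
    (hcarry : 2 ^ (L + K) ≤ n % 2 ^ (L + K) + t) :
    ((digits 2 (n + t)).sum : ℤ) - (digits 2 n).sum ≤ L + 1 - K := by
  set M := L + K
  have hLM : 2 ^ M = 2 ^ L * 2 ^ K := pow_add 2 L K
  obtain ⟨r, q, hr, rfl⟩ : ∃ r q, r < 2 ^ M ∧ n = r + 2 ^ M * q :=
    ⟨n % 2 ^ M, n / 2 ^ M, Nat.mod_lt _ (by positivity), (Nat.mod_add_div n _).symm⟩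
  rw [Nat.add_mul_mod_self_left, Nat.mod_eq_of_lt hr] at hcarry
  have hhigh : 2 ^ L * (2 ^ K - 1) ≤ r := by rw [Nat.mul_sub, mul_one]; omega
  obtain ⟨r', rfl⟩ := Nat.exists_eq_add_of_le' hhigh
  have hr' : r' < 2 ^ L := by rw [Nat.mul_sub, mul_one] at hr; omega
  obtain ⟨u, hu, hnt⟩ :
      ∃ u, u < 2 ^ L ∧ r' + 2 ^ L * (2 ^ K - 1) + 2 ^ M * q + t = u + 2 ^ M * (q + 1) :=
    ⟨r' + 2 ^ L * (2 ^ K - 1) + t - 2 ^ M, by omega, by rw [Nat.mul_succ]; omega⟩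
  have hsum_nt : (digits 2 (r' + 2 ^ L * (2 ^ K - 1) + 2 ^ M * q + t)).sum =
      (digits 2 u).sum + (digits 2 (q + 1)).sum := by
    rw [hnt, digits_sum_add_base_pow_mul_s4 one_lt_two
      (hu.trans_le (Nat.pow_le_pow_right two_pos (by omega)))]
  have hsum_n : (digits 2 (r' + 2 ^ L * (2 ^ K - 1) + 2 ^ M * q)).sum =
      (digits 2 r').sum + K + (digits 2 q).sum := by
    rw [digits_sum_add_base_pow_mul_s4 one_lt_two hr, digits_sum_add_base_pow_mul_s4 one_lt_two hr',
      digits_sum_base_pow_sub_one one_lt_two]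
    ring
  have hsum_u : (digits 2 u).sum ≤ L := by
    simpa using digits_sum_le_of_lt_base_pow one_lt_two hu
  have hsum_succ : (digits 2 (q + 1)).sum ≤ (digits 2 q).sum + 1 := by
    simpa using digits_sum_add_le 2 q 1
  rw [hsum_nt, hsum_n]
  omega

theorem digits_two_sum_add_sub_eq_iff_mod {t L K : ℕ} {j : ℤ} (ht : t < 2 ^ L)
    (hj : (L : ℤ) + 1 - K < j) (n : ℕ) :
    ((digits 2 (n + t)).sum : ℤ) - (digits 2 n).sum = j ↔
      ((digits 2 (n % 2 ^ (L + K) + t)).sum : ℤ) - (digits 2 (n % 2 ^ (L + K))).sum = j := by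
  have hr : n % 2 ^ (L + K) < 2 ^ (L + K) := Nat.mod_lt _ (by positivity)
  by_cases hcarry : 2 ^ (L + K) ≤ n % 2 ^ (L + K) + t
  · have hn := digits_two_sum_add_sub_le_of_carry ht hcarry
    have hr := digits_two_sum_add_sub_le_of_carry (n := n % 2 ^ (L + K)) ht
      (by rwa [Nat.mod_eq_of_lt hr])
    omega
  · conv_lhs => rw [← Nat.mod_add_div n (2 ^ (L + K))]
    rw [digits_sum_add_sub_eq_of_lt one_lt_two (not_le.mp hcarry)]

end Nat

theorem exists_finset_setOf_eq_biUnion_of_iff_mod {p : ℕ → Prop} {m : ℕ} (hm : 0 < m)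
    (hp : ∀ n, p n ↔ p (n % m)) :
    ∃ P : Finset (ℕ × ℕ), {n | p n} = ⋃ x ∈ P, {n | ∃ k : ℕ, n = x.1 + x.2 * k} := by
  classical
  refine ⟨((Finset.range m).filter p).image (·, m), ?_⟩
  ext n
  simp only [Set.mem_ofPred_eq, Set.mem_iUnion, Finset.mem_image, Finset.mem_filter,
    Finset.mem_range, exists_prop]
  constructor
  · intro hn
    exact ⟨_, ⟨n % m, ⟨Nat.mod_lt n hm, (hp n).1 hn⟩, rfl⟩, n / m,
      (Nat.mod_add_div n m).symm⟩
  · rintro ⟨_, ⟨a, ⟨ha, hpa⟩, rfl⟩, k, rfl⟩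
    rwa [hp, Nat.add_mul_mod_self_left, Nat.mod_eq_of_lt ha]

/-- For every `t ≥ 0` and every integer `j`, the set
`{n : s(n+t) - s(n) = j}` is a finite (possibly empty) union of arithmetic
progressions. -/
theorem cusick_stmt4 (t : ℕ) (j : ℤ) :
    ∃ P : Finset (ℕ × ℕ),
      {n : ℕ | ((Nat.digits 2 (n + t)).sum : ℤ) - ((Nat.digits 2 n).sum : ℤ) = j}
        = ⋃ p ∈ P, {m : ℕ | ∃ k : ℕ, m = p.1 + p.2 * k} :=
  exists_finset_setOf_eq_biUnion_of_iff_mod (m := 2 ^ (t + (t + 2 + j.natAbs))) (by positivity)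
    (Nat.digits_two_sum_add_sub_eq_iff_mod Nat.lt_two_pow_self (by omega))
end

section
/- The sequence m₂ defined by m₂(0) = 0, m₂(1) = 1, m₂(2t) = m₂(t), and m₂(2t+1) = (m₂(t) + m₂(t+1) + 1)/2 satisfies m₂(t) ≤ log(t)/(3 log 2) + 1 for all t ≥ 1. -/
private lemma cusick_key (a b c : ℝ) (ha : 1 ≤ a) (hb : 1 ≤ b) (hc : 0 < c)
    (h : 8 * a * b ≤ c ^ 2) :
    (Real.log a / (3 * Real.log 2) + 1) + (Real.log b / (3 * Real.log 2) + 1) + 1 ≤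
      2 * (Real.log c / (3 * Real.log 2) + 1) := by
  have hl2 : 0 < Real.log 2 := Real.log_pos (by norm_num)
  have h3 : (0 : ℝ) < 3 * Real.log 2 := by positivity
  have h1 : Real.log (8 * a * b) ≤ Real.log (c ^ 2) :=
    Real.log_le_log (by positivity) h
  have h8 : Real.log (8 * a * b) = 3 * Real.log 2 + Real.log a + Real.log b := by
    rw [Real.log_mul (by positivity) (by positivity),
      Real.log_mul (by norm_num) (by positivity)]
    have : (8 : ℝ) = 2 ^ 3 := by norm_num
    rw [this, Real.log_pow]
    push_cast; ring
  have h2 : Real.log (c ^ 2) = 2 * Real.log c := by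
    rw [Real.log_pow]; push_cast; ring
  rw [h8, h2] at h1
  have h4 : (Real.log a + Real.log b + 3 * Real.log 2) / (3 * Real.log 2) ≤
      (2 * Real.log c) / (3 * Real.log 2) := by
    gcongr
    linarith
  have ea : (Real.log a + Real.log b + 3 * Real.log 2) / (3 * Real.log 2) =
      Real.log a / (3 * Real.log 2) + Real.log b / (3 * Real.log 2) + 1 := by
    field_simp
  have ec : (2 * Real.log c) / (3 * Real.log 2) = 2 * (Real.log c / (3 * Real.log 2)) := by
    ring
  rw [ea, ec] at h4
  linarith

private lemma cusick_mono (a b : ℝ) (ha : 0 < a) (hab : a ≤ b) :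
    Real.log a / (3 * Real.log 2) + 1 ≤ Real.log b / (3 * Real.log 2) + 1 := by
  have hl2 : 0 < Real.log 2 := Real.log_pos (by norm_num)
  gcongr

/-- if `m₂` satisfies `m₂(0)=0`, `m₂(1)=1`, `m₂(2t)=m₂(t)`,
`m₂(2t+1)=(m₂(t)+m₂(t+1)+1)/2`, then `m₂(t) ≤ log t/(3 log 2) + 1` for `t ≥ 1`. -/
theorem cusick_stmt8 (m : ℕ → ℝ) (h0 : m 0 = 0) (h1 : m 1 = 1)
    (heven : ∀ t : ℕ, m (2 * t) = m t)
    (hodd : ∀ t : ℕ, m (2 * t + 1) = (m t + m (t + 1) + 1) / 2) :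
    ∀ t : ℕ, 1 ≤ t → m t ≤ Real.log t / (3 * Real.log 2) + 1 := by
  have hl2 : 0 < Real.log 2 := Real.log_pos (by norm_num)
  have main : ∀ t : ℕ, 1 ≤ t →
      m t ≤ Real.log t / (3 * Real.log 2) + 1 ∧
      m t + m (t + 1) + 1 ≤ 2 * (Real.log (2 * (t : ℝ) + 1) / (3 * Real.log 2) + 1) := by
    intro t
    induction t using Nat.strong_induction_on with
    | _ t ih =>
      intro ht
      rcases Nat.lt_or_ge t 2 with ht2 | ht2
      · -- t = 1
        interval_cases t
        have hm2 : m 2 = m 1 := by have := heven 1; norm_num at this; simpa using this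
        constructor
        · simp [h1]
        · rw [hm2, h1]
          have h89 : Real.log 8 ≤ Real.log 9 := Real.log_le_log (by norm_num) (by norm_num)
          have e8 : Real.log 8 = 3 * Real.log 2 := by
            have : (8 : ℝ) = 2 ^ 3 := by norm_num
            rw [this, Real.log_pow]; push_cast; ring
          have e9 : Real.log 9 = 2 * Real.log 3 := by
            have : (9 : ℝ) = 3 ^ 2 := by norm_num
            rw [this, Real.log_pow]; push_cast; ring
          rw [e8, e9] at h89
          have hc : (2 * ((1 : ℕ) : ℝ) + 1) = 3 := by norm_num
          rw [hc]
          have h4 : (1 : ℝ) ≤ 2 * Real.log 3 / (3 * Real.log 2) := by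
            rw [le_div_iff₀ (by positivity)]
            linarith
          have ec : 2 * Real.log 3 / (3 * Real.log 2) =
              2 * (Real.log 3 / (3 * Real.log 2)) := by ring
          rw [ec] at h4
          linarith
      · rcases Nat.even_or_odd t with ⟨u, hu⟩ | ⟨u, hu⟩
        · -- t = 2u, u ≥ 1
          have hu2 : t = 2 * u := by omega
          have hu1 : 1 ≤ u := by omega
          have hur : (1 : ℝ) ≤ (u : ℝ) := by exact_mod_cast hu1
          obtain ⟨Pu, Qu⟩ := ih u (by omega) hu1
          have hmt : m t = m u := by rw [hu2, heven]
          have hmt1 : m (t + 1) = (m u + m (u + 1) + 1) / 2 := by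
            have : t + 1 = 2 * u + 1 := by omega
            rw [this, hodd]
          have hodd' : m (t + 1) ≤ Real.log (2 * (u : ℝ) + 1) / (3 * Real.log 2) + 1 := by
            rw [hmt1]; linarith
          have hct : (t : ℝ) = 2 * u := by rw [hu2]; push_cast; ring
          constructor
          · rw [hmt]
            refine Pu.trans (cusick_mono _ _ (by linarith) ?_)
            rw [hct]; linarith
          · rw [hmt]
            have hprod : 8 * (u : ℝ) * (2 * (u : ℝ) + 1) ≤ (2 * (t : ℝ) + 1) ^ 2 := by
              rw [hct]; nlinarith
            have hkey := cusick_key (u : ℝ) (2 * (u : ℝ) + 1) (2 * (t : ℝ) + 1)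
              hur (by linarith) (by rw [hct]; linarith) hprod
            linarith
        · -- t = 2u + 1, u ≥ 1
          have hu1 : 1 ≤ u := by omega
          have hur : (1 : ℝ) ≤ (u : ℝ) := by exact_mod_cast hu1
          obtain ⟨Pu, Qu⟩ := ih u (by omega) hu1
          obtain ⟨Pu1, _⟩ := ih (u + 1) (by omega) (by omega)
          have hmt : m t = (m u + m (u + 1) + 1) / 2 := by rw [hu, hodd]
          have hmt1 : m (t + 1) = m (u + 1) := by
            have : t + 1 = 2 * (u + 1) := by omega
            rw [this, heven]
          have hPt : m t ≤ Real.log (2 * (u : ℝ) + 1) / (3 * Real.log 2) + 1 := by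
            rw [hmt]; linarith
          have hct : (t : ℝ) = 2 * (u : ℝ) + 1 := by rw [hu]; push_cast; ring
          constructor
          · rw [hct]; exact hPt
          · have hprod : 8 * (2 * (u : ℝ) + 1) * ((u : ℝ) + 1) ≤ (2 * (t : ℝ) + 1) ^ 2 := by
              rw [hct]; nlinarith
            have hkey := cusick_key (2 * (u : ℝ) + 1) ((u : ℝ) + 1) (2 * (t : ℝ) + 1)
              (by linarith) (by linarith) (by rw [hct]; linarith) hprod
            have hPu1' : m (u + 1) ≤ Real.log ((u : ℝ) + 1) / (3 * Real.log 2) + 1 := by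
              have hcast : ((u + 1 : ℕ) : ℝ) = (u : ℝ) + 1 := by push_cast; ring
              rw [← hcast]; exact Pu1
            rw [hmt1]
            linarith
  intro t ht
  exact (main t ht).1
end

section
/- Let t = Σ_{0 ≤ i ≤ ν} ε_i 2^i with ε_i ∈ {0,1}. Then m₂(t) = Σ_{0 ≤ i ≤ ν} ε_i − Σ_{0 ≤ i < j ≤ ν} ε_i ε_j 2^{i-j}, where m₂ is defined by m₂(0)=0, m₂(1)=1, m₂(2t)=m₂(t), m₂(2t+1)=(m₂(t)+m₂(t+1)+1)/2. -/
/-!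
Let `mirror t = Σ_j ε_j 2^{-j}` for the binary digits `ε_j` of `t`, and define `mTwo` by
`mTwo (2t) = mTwo t` and `mTwo (2t+1) = 1 + mTwo t - mirror t / 2`. Then
`mTwo (t+1) = mTwo t + 1 - mirror t`, so `mTwo (2t+1)` is the average of `mTwo t` and `mTwo (t+1)`
plus `1/2`: `mTwo` obeys the recurrence of `m₂`, hence equals it. Peeling off the lowest digit
`ε_0` of `t = ε_0 + 2t'` changes the closed form by `ε_0 - ε_0 mirror(t') / 2`, exactly as for `mTwo`.
-/

open Finset

lemma sum_range_succ_mul_pow {R : Type*} [CommSemiring R] (f : ℕ → R) (x : R) (n : ℕ) :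
    ∑ i ∈ range (n + 1), f i * x ^ i = x * ∑ i ∈ range n, f (i + 1) * x ^ i + f 0 := by
  rw [sum_range_succ', mul_sum]
  simp only [pow_succ, pow_zero, mul_one]
  congr 1
  exact sum_congr rfl fun i _ => by ring

lemma sum_range_succ_sum_range {M : Type*} [AddCommMonoid M] (g : ℕ → ℕ → M) (n : ℕ) :
    ∑ j ∈ range (n + 1), ∑ i ∈ range j, g i j
      = ∑ j ∈ range n, ∑ i ∈ range j, g (i + 1) (j + 1) + ∑ j ∈ range n, g 0 (j + 1) := by
  simp only [sum_range_succ' _ n, sum_range_succ', range_zero, sum_empty, add_zero,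
    sum_add_distrib]

noncomputable def mirror : ℕ → ℝ :=
  Nat.evenOddRec (P := fun _ => ℝ) 0 (fun _ r => r / 2) (fun _ r => 1 + r / 2)

noncomputable def mTwo : ℕ → ℝ :=
  Nat.evenOddRec (P := fun _ => ℝ) 0 (fun _ r => r) (fun n r => 1 + r - mirror n / 2)

@[simp] lemma mirror_zero : mirror 0 = 0 := Nat.evenOddRec_zero ..

lemma mirror_two_mul (n : ℕ) : mirror (2 * n) = mirror n / 2 :=
  Nat.evenOddRec_even _ _ _ (zero_div 2) n

lemma mirror_two_mul_add_one (n : ℕ) : mirror (2 * n + 1) = 1 + mirror n / 2 :=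
  Nat.evenOddRec_odd _ _ _ (zero_div 2) n

@[simp] lemma mTwo_zero : mTwo 0 = 0 := Nat.evenOddRec_zero ..

lemma mTwo_two_mul (n : ℕ) : mTwo (2 * n) = mTwo n :=
  Nat.evenOddRec_even _ _ _ rfl n

lemma mTwo_two_mul_add_one (n : ℕ) : mTwo (2 * n + 1) = 1 + mTwo n - mirror n / 2 :=
  Nat.evenOddRec_odd _ _ _ rfl n

lemma mTwo_one : mTwo 1 = 1 := by
  simpa using mTwo_two_mul_add_one 0

lemma mTwo_succ (n : ℕ) : mTwo (n + 1) = mTwo n + 1 - mirror n := by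
  induction n using Nat.evenOddRec with
  | h0 => simp [mTwo_one]
  | h_even n _ =>
    rw [mTwo_two_mul_add_one, mTwo_two_mul, mirror_two_mul]; ring
  | h_odd n ih =>
    rw [show 2 * n + 1 + 1 = 2 * (n + 1) by ring, mTwo_two_mul, ih, mTwo_two_mul_add_one,
      mirror_two_mul_add_one]
    ring

lemma mTwo_two_mul_add_one_eq_avg (n : ℕ) :
    mTwo (2 * n + 1) = (mTwo n + mTwo (n + 1) + 1) / 2 := by
  rw [mTwo_two_mul_add_one, mTwo_succ]; ring

theorem eq_mTwo_of_recurrence (m : ℕ → ℝ) (h0 : m 0 = 0)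
    (heven : ∀ t : ℕ, m (2 * t) = m t)
    (hodd : ∀ t : ℕ, m (2 * t + 1) = (m t + m (t + 1) + 1) / 2) (t : ℕ) :
    m t = mTwo t := by
  suffices ∀ t, m t = mTwo t ∧ m (t + 1) = mTwo (t + 1) from (this t).1
  intro t
  induction t using Nat.evenOddRec with
  | h0 =>
    have h1 := hodd 0
    simp only [mul_zero, zero_add, h0] at h1
    exact ⟨by rw [h0, mTwo_zero], by rw [mTwo_one]; linarith⟩
  | h_even n ih =>
    refine ⟨by rw [heven, mTwo_two_mul, ih.1], ?_⟩
    rw [hodd, mTwo_two_mul_add_one_eq_avg, ih.1, ih.2]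
  | h_odd n ih =>
    refine ⟨by rw [hodd, mTwo_two_mul_add_one_eq_avg, ih.1, ih.2], ?_⟩
    rw [show 2 * n + 1 + 1 = 2 * (n + 1) by ring, heven, mTwo_two_mul, ih.2]

lemma mirror_two_mul_add {b : ℕ} (hb : b = 0 ∨ b = 1) (n : ℕ) :
    mirror (2 * n + b) = b + mirror n / 2 := by
  rcases hb with rfl | rfl
  · simp [mirror_two_mul]
  · simp [mirror_two_mul_add_one]

lemma mTwo_two_mul_add {b : ℕ} (hb : b = 0 ∨ b = 1) (n : ℕ) :
    mTwo (2 * n + b) = b + mTwo n - b * mirror n / 2 := by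
  rcases hb with rfl | rfl
  · simp [mTwo_two_mul]
  · simp [mTwo_two_mul_add_one]

lemma mirror_sum_mul_two_pow (n : ℕ) (ε : ℕ → ℕ) (hε : ∀ i < n, ε i = 0 ∨ ε i = 1) :
    mirror (∑ i ∈ range n, ε i * 2 ^ i) = ∑ i ∈ range n, (ε i : ℝ) / 2 ^ i := by
  induction n generalizing ε with
  | zero => simp
  | succ n ih =>
    rw [sum_range_succ_mul_pow, mirror_two_mul_add (hε 0 n.succ_pos),
      ih _ fun i hi => hε (i + 1) (by omega), sum_range_succ', sum_div]
    simp only [pow_succ, pow_zero, div_one, div_div]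
    ring

lemma mTwo_sum_mul_two_pow (n : ℕ) (ε : ℕ → ℕ) (hε : ∀ i < n, ε i = 0 ∨ ε i = 1) :
    mTwo (∑ i ∈ range n, ε i * 2 ^ i)
      = ∑ i ∈ range n, (ε i : ℝ)
        - ∑ j ∈ range n, ∑ i ∈ range j, (ε i : ℝ) * ε j * (2 : ℝ) ^ ((i : ℤ) - j) := by
  induction n generalizing ε with
  | zero => simp
  | succ n ih =>
    have hshift : ∀ i j : ℕ, (2 : ℝ) ^ (((i + 1 : ℕ) : ℤ) - (j + 1 : ℕ)) = 2 ^ ((i : ℤ) - j) := by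
      intro i j; push_cast; ring_nf
    have hfirst : ∑ j ∈ range n, (ε 0 : ℝ) * ε (j + 1) * (2 : ℝ) ^ (((0 : ℕ) : ℤ) - (j + 1 : ℕ))
        = ε 0 * ((∑ j ∈ range n, (ε (j + 1) : ℝ) / 2 ^ j) / 2) := by
      rw [sum_div, mul_sum]
      refine sum_congr rfl fun j _ => ?_
      rw [Nat.cast_zero, zero_sub, zpow_neg, zpow_natCast, pow_succ]
      field_simp
    rw [sum_range_succ_mul_pow, mTwo_two_mul_add (hε 0 n.succ_pos),
      ih _ fun i hi => hε (i + 1) (by omega),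
      mirror_sum_mul_two_pow _ _ fun i hi => hε (i + 1) (by omega),
      sum_range_succ_sum_range, hfirst, sum_range_succ' _ n]
    simp only [hshift]
    ring

theorem cusick_stmt9_general (m : ℕ → ℝ) (h0 : m 0 = 0)
    (heven : ∀ t : ℕ, m (2 * t) = m t)
    (hodd : ∀ t : ℕ, m (2 * t + 1) = (m t + m (t + 1) + 1) / 2)
    (ν : ℕ) (ε : ℕ → ℕ) (hε : ∀ i, i ≤ ν → ε i = 0 ∨ ε i = 1) :
    m (∑ i ∈ Finset.range (ν + 1), ε i * 2 ^ i)
      = (∑ i ∈ Finset.range (ν + 1), (ε i : ℝ))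
        - ∑ j ∈ Finset.range (ν + 1), ∑ i ∈ Finset.range j,
            (ε i : ℝ) * (ε j : ℝ) * (2 : ℝ) ^ ((i : ℤ) - (j : ℤ)) := by
  rw [eq_mTwo_of_recurrence m h0 heven hodd]
  exact mTwo_sum_mul_two_pow (ν + 1) ε fun i hi => hε i (Nat.lt_succ_iff.mp hi)

/-- exact formula `m₂(t) = Σ ε_i − Σ_{i<j} ε_i ε_j 2^{i-j}`
for `t = Σ_{i ≤ ν} ε_i 2^i` with binary digits `ε_i ∈ {0,1}`. -/
theorem cusick_stmt9 (m : ℕ → ℝ) (h0 : m 0 = 0) (h1 : m 1 = 1)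
    (heven : ∀ t : ℕ, m (2 * t) = m t)
    (hodd : ∀ t : ℕ, m (2 * t + 1) = (m t + m (t + 1) + 1) / 2)
    (ν : ℕ) (ε : ℕ → ℕ) (hε : ∀ i, i ≤ ν → ε i = 0 ∨ ε i = 1) :
    m (∑ i ∈ Finset.range (ν + 1), ε i * 2 ^ i)
      = (∑ i ∈ Finset.range (ν + 1), (ε i : ℝ))
        - ∑ j ∈ Finset.range (ν + 1), ∑ i ∈ Finset.range j,
            (ε i : ℝ) * (ε j : ℝ) * (2 : ℝ) ^ ((i : ℤ) - (j : ℤ)) :=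
  cusick_stmt9_general m h0 heven hodd ν ε hε
end

section
/- Let M₁ = (1/2)(A₁ + B₁) with A₁ = [[cosh x, sinh x],[cosh x, sinh x]] and B₁ = [[1,−1],[−1,1]]. Then for all m ≥ 1, 2·M₁^m = (e^x/2)^{m−1}·A₁ + B₁ + (e^{−x}/(2−e^x))·(1 − (e^x/2)^{m−1})·D₁, where D₁ = [[1,−1],[1,−1]]. -/
/-!
Write `𝟙 = (1, 1)` and `w = (1, -1)`. Then `A₁ = 𝟙 (cosh, sinh)ᵀ`, `B₁ = w wᵀ` and
`D₁ = 𝟙 wᵀ` are rank one, and `wᵀ 𝟙 = 0`, so right multiplication by `A₁ + B₁` preserves the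
span of `A₁, B₁, D₁`: the coefficients of `2 M₁ᵐ = aₘ A₁ + B₁ + dₘ D₁` satisfy
`aₘ₊₁ = (eˣ/2) aₘ` and `dₘ₊₁ = dₘ + e⁻ˣ aₘ / 2`. Hence `aₘ = (eˣ/2)ᵐ⁻¹` and `dₘ` is a
geometric sum with ratio `eˣ/2`, which `(2 - eˣ)⁻¹` sums.
-/

open Matrix

section RankOne

variable {R : Type*} [CommRing R]

lemma equalRows_eq_vecMulVec (u v : R) : !![u, v; u, v] = vecMulVec ![1, 1] ![u, v] := by
  ext i j
  fin_cases i <;> fin_cases j <;> simp [vecMulVec_apply]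

lemma alternating_eq_vecMulVec :
    (!![1, -1; -1, 1] : Matrix (Fin 2) (Fin 2) R) = vecMulVec ![1, -1] ![1, -1] := by
  ext i j
  fin_cases i <;> fin_cases j <;> simp [vecMulVec_apply]

lemma combination_mul_equalRows_add_alternating (u v a d : R) :
    (a • !![u, v; u, v] + !![1, -1; -1, 1] + d • !![1, -1; 1, -1]) *
        (!![u, v; u, v] + !![1, -1; -1, 1])
      = (a * (u + v)) • !![u, v; u, v] + (2 : R) • !![1, -1; -1, 1]
        + (a * (u - v) + 2 * d) • !![1, -1; 1, -1] := by
  -- `equalRows_eq_vecMulVec` also rewrites `!![1, -1; 1, -1]`, as `u = 1`, `v = -1`.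
  simp only [equalRows_eq_vecMulVec, alternating_eq_vecMulVec, add_mul, mul_add, smul_mul,
    vecMulVec_mul_vecMulVec, vecMulVec_smul, dotProduct, Fin.sum_univ_two,
    cons_val_zero, cons_val_one, cons_val_fin_one]
  module

theorem two_smul_pow_succ_eq {u v c e f g : R} (hc : c * 2 = 1) (he : u + v = e)
    (hf : u - v = f) (hg : (2 - e) * g = 1) (n : ℕ) :
    (2 : R) • (c • (!![u, v; u, v] + !![1, -1; -1, 1])) ^ (n + 1)
      = (c * e) ^ n • !![u, v; u, v] + !![1, -1; -1, 1]
        + (f * g * (1 - (c * e) ^ n)) • !![1, -1; 1, -1] := by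
  induction n with
  | zero =>
    rw [zero_add, pow_one, smul_smul, mul_comm, hc, one_smul, pow_zero, one_smul, sub_self,
      mul_zero, zero_smul, add_zero]
  | succ n ih =>
    have coeff_A : c * ((c * e) ^ n * e) = (c * e) ^ (n + 1) := by ring
    have coeff_D : c * ((c * e) ^ n * f + 2 * (f * g * (1 - (c * e) ^ n)))
        = f * g * (1 - (c * e) ^ (n + 1)) := by
      linear_combination (f * g) * hc - (c * (c * e) ^ n * f) * hg
    rw [pow_succ, ← smul_mul_assoc, ih, mul_smul_comm, combination_mul_equalRows_add_alternating,
      he, hf, smul_add, smul_add, smul_smul, smul_smul, smul_smul, hc, one_smul,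
      coeff_A, coeff_D]

end RankOne

open PowerSeries

/-- closed form for powers of `M₁ = (A₁+B₁)/2`, with entries in
the ring of formal power series over ℝ, where `A₁ = [[cosh, sinh],[cosh, sinh]]`,
`B₁ = [[1,−1],[−1,1]]`, `D₁ = [[1,−1],[1,−1]]`. -/
theorem cusick_stmt12 (m : ℕ) (hm : 1 ≤ m) :
    let coshS : PowerSeries ℝ :=
      PowerSeries.C (1 / 2 : ℝ) * (PowerSeries.exp ℝ + PowerSeries.rescale (-1 : ℝ) (PowerSeries.exp ℝ))
    let sinhS : PowerSeries ℝ :=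
      PowerSeries.C (1 / 2 : ℝ) * (PowerSeries.exp ℝ - PowerSeries.rescale (-1 : ℝ) (PowerSeries.exp ℝ))
    let A₁ : Matrix (Fin 2) (Fin 2) (PowerSeries ℝ) :=
      !![coshS, sinhS; coshS, sinhS]
    let B₁ : Matrix (Fin 2) (Fin 2) (PowerSeries ℝ) := !![1, -1; -1, 1]
    let D₁ : Matrix (Fin 2) (Fin 2) (PowerSeries ℝ) := !![1, -1; 1, -1]
    let M₁ : Matrix (Fin 2) (Fin 2) (PowerSeries ℝ) :=
      (PowerSeries.C (1 / 2 : ℝ)) • (A₁ + B₁)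
    (2 : PowerSeries ℝ) • M₁ ^ m
      = ((PowerSeries.C (1 / 2 : ℝ) * PowerSeries.exp ℝ) ^ (m - 1)) • A₁ + B₁
        + ((PowerSeries.rescale (-1 : ℝ) (PowerSeries.exp ℝ))
            * (2 - PowerSeries.exp ℝ)⁻¹
            * (1 - (PowerSeries.C (1 / 2 : ℝ) * PowerSeries.exp ℝ) ^ (m - 1))) • D₁ := by
  obtain ⟨n, rfl⟩ := Nat.exists_eq_add_of_le' hm
  have half_mul_two : C (1 / 2 : ℝ) * 2 = 1 := by
    rw [← map_ofNat C 2, ← map_mul]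
    norm_num
  have two_sub_exp_mul_inv : (2 - exp ℝ) * (2 - exp ℝ)⁻¹ = 1 :=
    PowerSeries.mul_inv_cancel _ (by norm_num [map_ofNat])
  exact two_smul_pow_succ_eq half_mul_two (by linear_combination exp ℝ * half_mul_two)
    (by linear_combination rescale (-1 : ℝ) (exp ℝ) * half_mul_two) two_sub_exp_mul_inv n
end

section
/- Let M₀ = (1/2)(A₀ + B₀) with A₀ = [[cosh x, sinh x],[−cosh x, −sinh x]] and B₀ = [[1,1],[1,1]]. Then for all m ≥ 1, 2·M₀^m = (e^{−x}/2)^{m−1}·A₀ + B₀ + (e^x/(2−e^{−x}))·(1 − (e^{−x}/2)^{m−1})·D₀, where D₀ = [[1,1],[−1,−1]]. -/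
/-!
With `P = A₀`, `J = B₀` and `M = M₀ = (P + J)/2`, the rank-one matrices `P, J, D₀` span a space
stable under right multiplication by `M`: `P M = a P + b D₀`, `J M = J`, `D₀ M = D₀`, where
`a = (cosh - sinh)/2 = e⁻ˣ/2` and `b = (cosh + sinh)/2 = eˣ/2`. Hence
`2 M^m = (P + J) M^(m-1) = a^(m-1) P + J + b (1 + a + ⋯ + a^(m-2)) D₀`, and the geometric sum
equals `c (1 - a^(m-1))` with `c = b/(1 - a) = eˣ/(2 - e⁻ˣ)`; the power series `2 - e⁻ˣ` is
invertible because its constant coefficient is `1`.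
-/

open PowerSeries

section RightMultiplication

variable {R X : Type*} [CommRing R] [Ring X] [Module R X] [IsScalarTower R X X]

theorem mul_pow_eq_self_of_mul_eq_self {B M : X} (h : B * M = B) (n : ℕ) : B * M ^ n = B := by
  induction n with
  | zero => rw [pow_zero, mul_one]
  | succ n ih => rw [pow_succ, ← mul_assoc, ih, h]

theorem mul_pow_eq_smul_add_smul {A D M : X} {a c : R}
    (hA : A * M = a • A + (c * (1 - a)) • D) (hD : D * M = D) (n : ℕ) :
    A * M ^ n = a ^ n • A + (c * (1 - a ^ n)) • D := by
  induction n with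
  | zero => simp
  | succ n ih =>
    rw [pow_succ, ← mul_assoc, ih, add_mul, smul_mul_assoc, smul_mul_assoc, hA, hD, smul_add,
      smul_smul, smul_smul, add_assoc, ← add_smul]
    congr 2 <;> ring

end RightMultiplication

namespace Matrix

variable {R : Type*} [CommRing R] (p q : R)

theorem neg_rows_mul_self :
    !![p, q; -p, -q] * !![p, q; -p, -q] = (p - q) • !![p, q; -p, -q] := by
  ext i j; fin_cases i <;> fin_cases j <;> simp <;> ring

theorem neg_rows_mul_ones :
    !![p, q; -p, -q] * !![1, 1; 1, 1] = (p + q) • (!![1, 1; -1, -1] : Matrix (Fin 2) (Fin 2) R) := by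
  ext i j; fin_cases i <;> fin_cases j <;> simp <;> ring

theorem ones_mul_neg_rows : !![1, 1; 1, 1] * !![p, q; -p, -q] = 0 := by
  ext i j; fin_cases i <;> fin_cases j <;> simp

theorem ones_mul_ones :
    !![1, 1; 1, 1] * !![1, 1; 1, 1] = (2 : R) • (!![1, 1; 1, 1] : Matrix (Fin 2) (Fin 2) R) := by
  ext i j; fin_cases i <;> fin_cases j <;> simp <;> norm_num

theorem neg_ones_mul_neg_rows : !![1, 1; -1, -1] * !![p, q; -p, -q] = 0 := by
  ext i j; fin_cases i <;> fin_cases j <;> simp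

theorem neg_ones_mul_ones :
    !![1, 1; -1, -1] * !![1, 1; 1, 1] = (2 : R) • (!![1, 1; -1, -1] : Matrix (Fin 2) (Fin 2) R) := by
  ext i j; fin_cases i <;> fin_cases j <;> simp <;> norm_num

variable {p q} {s c : R}

theorem two_smul_pow_succ_neg_rows_add_ones (hs : s * 2 = 1) (hc : c * (2 - (p - q)) = p + q)
    (n : ℕ) :
    (2 : R) • (s • (!![p, q; -p, -q] + !![1, 1; 1, 1])) ^ (n + 1)
      = (s * (p - q)) ^ n • !![p, q; -p, -q] + !![1, 1; 1, 1]
        + (c * (1 - (s * (p - q)) ^ n)) • !![1, 1; -1, -1] := by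
  set P : Matrix (Fin 2) (Fin 2) R := !![p, q; -p, -q]
  set J : Matrix (Fin 2) (Fin 2) R := !![1, 1; 1, 1]
  set D : Matrix (Fin 2) (Fin 2) R := !![1, 1; -1, -1]
  set M := s • (P + J)
  have hP : P * M = (s * (p - q)) • P + (c * (1 - s * (p - q))) • D := by
    rw [mul_smul_comm, mul_add, neg_rows_mul_self, neg_rows_mul_ones, smul_add, smul_smul,
      smul_smul]
    congr 2
    linear_combination -s * hc + c * hs
  have hJ : J * M = J := by
    rw [mul_smul_comm, mul_add, ones_mul_neg_rows, ones_mul_ones, zero_add, smul_smul, hs,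
      one_smul]
  have hD : D * M = D := by
    rw [mul_smul_comm, mul_add, neg_ones_mul_neg_rows, neg_ones_mul_ones, zero_add, smul_smul, hs,
      one_smul]
  rw [pow_succ', ← smul_mul_assoc, smul_smul, mul_comm, hs, one_smul, add_mul,
    mul_pow_eq_smul_add_smul hP hD, mul_pow_eq_self_of_mul_eq_self hJ]
  abel

end Matrix

/-- closed form for powers of `M₀ = (A₀+B₀)/2`, with entries in
the ring of formal power series over ℝ, where
`A₀ = [[cosh, sinh],[−cosh, −sinh]]`, `B₀ = [[1,1],[1,1]]`,
`D₀ = [[1,1],[−1,−1]]`. -/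
theorem cusick_stmt13 (m : ℕ) (hm : 1 ≤ m) :
    let coshS : PowerSeries ℝ :=
      PowerSeries.C (R := ℝ) (1 / 2) * (PowerSeries.exp ℝ + PowerSeries.rescale (-1 : ℝ) (PowerSeries.exp ℝ))
    let sinhS : PowerSeries ℝ :=
      PowerSeries.C (R := ℝ) (1 / 2) * (PowerSeries.exp ℝ - PowerSeries.rescale (-1 : ℝ) (PowerSeries.exp ℝ))
    let A₀ : Matrix (Fin 2) (Fin 2) (PowerSeries ℝ) :=
      !![coshS, sinhS; -coshS, -sinhS]
    let B₀ : Matrix (Fin 2) (Fin 2) (PowerSeries ℝ) := !![1, 1; 1, 1]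
    let D₀ : Matrix (Fin 2) (Fin 2) (PowerSeries ℝ) := !![1, 1; -1, -1]
    let M₀ : Matrix (Fin 2) (Fin 2) (PowerSeries ℝ) :=
      (PowerSeries.C (R := ℝ) (1 / 2)) • (A₀ + B₀)
    (2 : PowerSeries ℝ) • M₀ ^ m
      = ((PowerSeries.C (R := ℝ) (1 / 2) * PowerSeries.rescale (-1 : ℝ) (PowerSeries.exp ℝ)) ^ (m - 1)) • A₀
        + B₀
        + ((PowerSeries.exp ℝ)
            * (2 - PowerSeries.rescale (-1 : ℝ) (PowerSeries.exp ℝ))⁻¹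
            * (1 - (PowerSeries.C (R := ℝ) (1 / 2) * PowerSeries.rescale (-1 : ℝ) (PowerSeries.exp ℝ)) ^ (m - 1))) • D₀ := by
  intro coshS sinhS A₀ B₀ D₀ M₀
  obtain ⟨n, rfl⟩ := Nat.exists_eq_add_of_le' hm
  set e := exp ℝ
  set f := rescale (-1 : ℝ) e
  have hs : C (1 / 2 : ℝ) * 2 = 1 := by
    rw [← map_ofNat C 2, ← map_mul]
    norm_num
  have hf : constantCoeff f = 1 := by
    simp [f, e, ← coeff_zero_eq_constantCoeff_apply, coeff_rescale]
  have hc : e * (2 - f)⁻¹ * (2 - f) = e := by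
    rw [mul_assoc, PowerSeries.inv_mul_cancel _ (by norm_num [hf, map_ofNat]), mul_one]
  have hdiff : coshS - sinhS = f := by linear_combination f * hs
  have hsum : coshS + sinhS = e := by linear_combination e * hs
  have key := Matrix.two_smul_pow_succ_neg_rows_add_ones hs (c := e * (2 - f)⁻¹)
    (by rw [hdiff, hsum, hc]) n
  rw [hdiff] at key
  simpa only [Nat.add_sub_cancel] using key
end

section
/- For every integer k ≥ 1, the k-th coefficient of the exponential-type generating function 1/(2 − e^x) (i.e. [x^k] 1/(2−e^x)) satisfies [x^k] 1/(2−e^x) ≤ 1/(log 2)^k. -/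
/-!
Writing `2 - eˣ = 1 - ψ` with `ψ = eˣ - 1`, the coefficients `aₙ` of `(1 - ψ)⁻¹` satisfy
`aₙ = ∑_{i + j = n} ψᵢ aⱼ` for `n ≥ 1`. Since `ψ₀ = 0` and `ψᵢ ≥ 0`, strong induction gives
`aₙ ≤ r⁻ⁿ ∑_{i ≤ n} ψᵢ rⁱ ≤ r⁻ⁿ` as soon as the partial sums of `ψ(r)` are at most `1`;
for `r = log 2` they are bounded by `e^{log 2} - 1 = 1`.
-/

open PowerSeries Finset

namespace PowerSeries

theorem coeff_inv_one_sub_eq_coeff_mul {K : Type*} [Field K] {ψ : K⟦X⟧}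
    (hψ : constantCoeff ψ = 0) {n : ℕ} (hn : n ≠ 0) :
    coeff n (1 - ψ)⁻¹ = coeff n (ψ * (1 - ψ)⁻¹) := by
  have hinv : (1 - ψ) * (1 - ψ)⁻¹ = 1 := PowerSeries.mul_inv_cancel _ (by simp [hψ])
  have hfix : (1 - ψ)⁻¹ = 1 + ψ * (1 - ψ)⁻¹ := by linear_combination hinv
  conv_lhs => rw [hfix]
  simp [coeff_one, hn]

theorem coeff_inv_one_sub_le_inv_pow {K : Type*} [Field K] [LinearOrder K] [IsStrictOrderedRing K]
    {ψ : K⟦X⟧} (hψ : constantCoeff ψ = 0) (hψ_nonneg : ∀ i, 0 ≤ coeff i ψ) {r : K} (hr : 0 < r)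
    (hsum : ∀ n, ∑ i ∈ range n, coeff i ψ * r ^ i ≤ 1) (n : ℕ) :
    coeff n (1 - ψ)⁻¹ ≤ r⁻¹ ^ n := by
  induction n using Nat.strong_induction_on with
  | _ n ih =>
  rcases eq_or_ne n 0 with rfl | hn
  · simp [constantCoeff_inv, hψ]
  calc coeff n (1 - ψ)⁻¹
      = ∑ p ∈ antidiagonal n, coeff p.1 ψ * coeff p.2 (1 - ψ)⁻¹ := by
        rw [coeff_inv_one_sub_eq_coeff_mul hψ hn, coeff_mul]
    _ ≤ ∑ p ∈ antidiagonal n, coeff p.1 ψ * r⁻¹ ^ p.2 := by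
        refine sum_le_sum fun p hp => ?_
        rcases eq_or_ne p.1 0 with h0 | h0
        · simp [h0, hψ]
        · have : p.2 < n := by rw [← mem_antidiagonal.mp hp]; omega
          exact mul_le_mul_of_nonneg_left (ih _ this) (hψ_nonneg _)
    _ = r⁻¹ ^ n * ∑ i ∈ range (n + 1), coeff i ψ * r ^ i := by
        rw [Nat.sum_antidiagonal_eq_sum_range_succ (fun i j => coeff i ψ * r⁻¹ ^ j), mul_sum]
        refine sum_congr rfl fun i hi => ?_
        obtain ⟨j, rfl⟩ := Nat.exists_eq_add_of_le (Nat.lt_succ_iff.mp (mem_range.mp hi))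
        rw [Nat.add_sub_cancel_left, pow_add, inv_pow r i]
        field_simp
    _ ≤ r⁻¹ ^ n := mul_le_of_le_one_right (by positivity) (hsum _)

theorem coeff_exp_sub_one_nonneg (i : ℕ) : 0 ≤ coeff i (exp ℝ - 1 : ℝ⟦X⟧) := by
  rcases eq_or_ne i 0 with rfl | hi
  · simp
  · simp [coeff_exp, coeff_one, hi]

theorem sum_range_coeff_exp_sub_one_mul_pow_le {r : ℝ} (hr : 0 ≤ r) (n : ℕ) :
    ∑ i ∈ range n, coeff i (exp ℝ - 1) * r ^ i ≤ Real.exp r - 1 := by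
  rcases n with _ | n
  · simpa using Real.one_le_exp hr
  have hterm (i : ℕ) : coeff (i + 1) (exp ℝ - 1) * r ^ (i + 1) = r ^ (i + 1) / (i + 1).factorial := by
    simp [coeff_exp, div_eq_inv_mul]
  have hexp := Real.sum_le_exp_of_nonneg hr (n + 1)
  rw [sum_range_succ'] at hexp
  rw [sum_range_succ', sum_congr rfl fun i _ => hterm i]
  simp only [pow_zero, Nat.factorial_zero, Nat.cast_one, div_one] at hexp
  simp only [coeff_zero_eq_constantCoeff, map_sub, constantCoeff_exp, map_one, sub_self, zero_mul,
    add_zero]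
  linarith

end PowerSeries

theorem cusick_stmt14_general (k : ℕ) :
    PowerSeries.coeff k (2 - PowerSeries.exp ℝ)⁻¹ ≤ 1 / (Real.log 2) ^ k := by
  have hlog : 0 < Real.log 2 := Real.log_pos one_lt_two
  have hsplit : (2 - exp ℝ : ℝ⟦X⟧) = 1 - (exp ℝ - 1) := by ring
  rw [hsplit, one_div, ← inv_pow]
  refine coeff_inv_one_sub_le_inv_pow (by simp) coeff_exp_sub_one_nonneg hlog (fun n => ?_) k
  refine (sum_range_coeff_exp_sub_one_mul_pow_le hlog.le n).trans_eq ?_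
  rw [Real.exp_log two_pos]
  norm_num

/-- for `k ≥ 1`, `[x^k] 1/(2 − e^x) ≤ 1/(log 2)^k`. -/
theorem cusick_stmt14 (k : ℕ) (hk : 1 ≤ k) :
    PowerSeries.coeff k (2 - PowerSeries.exp ℝ)⁻¹ ≤ 1 / (Real.log 2) ^ k :=
  cusick_stmt14_general k
end

section
/- The sequence k ↦ [x^k] 1/(2 − e^x) of power series coefficients is nondecreasing in k ≥ 0. -/
/-!
Write `2 - exp = 1 - h` with `h = exp - 1`, so `h` has no constant term, nonnegative
coefficients and linear coefficient `1`. Then `g = (1 - h)⁻¹` satisfies `g = 1 + h g`, i.e.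
`gₙ₊₁ = ∑_{i+j=n} hᵢ₊₁ gⱼ`. By strong induction every `gₙ ≥ 0`, and keeping only the term
`h₁ gₙ ≥ gₙ` of that sum gives `gₙ₊₁ ≥ gₙ`.
-/

open PowerSeries Finset

namespace PowerSeries

variable {𝕜 : Type*} [Field 𝕜]

theorem inv_one_sub_eq_one_add_mul {h : 𝕜⟦X⟧} (h0 : constantCoeff h = 0) :
    (1 - h)⁻¹ = 1 + h * (1 - h)⁻¹ := by
  have hunit : (1 - h) * (1 - h)⁻¹ = 1 :=
    PowerSeries.mul_inv_cancel _ (by simp [h0])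
  linear_combination hunit

theorem coeff_succ_inv_one_sub {h : 𝕜⟦X⟧} (h0 : constantCoeff h = 0) (n : ℕ) :
    coeff (n + 1) (1 - h)⁻¹ =
      ∑ p ∈ antidiagonal n, coeff (p.1 + 1) h * coeff p.2 (1 - h)⁻¹ := by
  conv_lhs => rw [inv_one_sub_eq_one_add_mul h0]
  rw [map_add, coeff_one, if_neg n.succ_ne_zero, zero_add, coeff_mul,
    Nat.sum_antidiagonal_succ, coeff_zero_eq_constantCoeff_apply, h0, zero_mul, zero_add]

variable [PartialOrder 𝕜] [IsOrderedRing 𝕜] {h : 𝕜⟦X⟧}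

theorem coeff_inv_one_sub_nonneg (h0 : constantCoeff h = 0)
    (hnonneg : ∀ n, 0 ≤ coeff (n + 1) h) (n : ℕ) : 0 ≤ coeff n (1 - h)⁻¹ := by
  induction n using Nat.strong_induction_on with
  | _ n ih =>
    cases n with
    | zero => simp [h0]
    | succ n =>
      rw [coeff_succ_inv_one_sub h0]
      exact sum_nonneg fun p hp ↦
        mul_nonneg (hnonneg _) (ih _ (Finset.Nat.antidiagonal.snd_lt hp))

theorem monotone_coeff_inv_one_sub (h0 : constantCoeff h = 0)
    (hnonneg : ∀ n, 0 ≤ coeff (n + 1) h) (h1 : 1 ≤ coeff 1 h) :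
    Monotone fun n ↦ coeff n (1 - h)⁻¹ := by
  refine monotone_nat_of_le_succ fun n ↦ ?_
  have hg := coeff_inv_one_sub_nonneg h0 hnonneg
  calc coeff n (1 - h)⁻¹ ≤ coeff 1 h * coeff n (1 - h)⁻¹ := le_mul_of_one_le_left (hg n) h1
    _ ≤ coeff (n + 1) (1 - h)⁻¹ := by
      rw [coeff_succ_inv_one_sub h0]
      have hmem : (0, n) ∈ antidiagonal n := mem_antidiagonal.2 (zero_add n)
      exact single_le_sum (f := fun p ↦ coeff (p.1 + 1) h * coeff p.2 (1 - h)⁻¹)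
        (fun p _ ↦ mul_nonneg (hnonneg _) (hg _)) hmem

end PowerSeries

/-- `k ↦ [x^k] 1/(2 − e^x)` is nondecreasing. -/
theorem cusick_stmt16 :
    Monotone (fun k : ℕ => PowerSeries.coeff k (2 - PowerSeries.exp ℝ)⁻¹) := by
  have hsplit : (2 : ℝ⟦X⟧) - exp ℝ = 1 - (exp ℝ - 1) := by ring
  rw [hsplit]
  exact monotone_coeff_inv_one_sub (by simp) (fun n ↦ by simp [coeff_exp, coeff_one])
    (by simp [coeff_exp])
end
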